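/- Let J₀ be a real N×P matrix, let Y, f₀ ∈ ℝ^N, set g₀ = f₀ − Y and Θ̂₀ = J₀ J₀ᵀ, and assume Θ̂₀ is invertible. Fix η > 0. Then the curve ω : [0,∞) → ℝ^P defined by ω(t) = − J₀ᵀ Θ̂₀⁻¹ (I − exp(−η Θ̂₀ t)) g₀ satisfies ω(0) = 0 and, for every t ≥ 0, the gradient-flow equation for the linearized network with squared loss: ω′(t) = − η J₀ᵀ (J₀ ω(t) + g₀). -/

import Mathlib

/-!
Write `E(t) = exp(-(η t) Θ)`. Since `J Jᵀ Θ⁻¹ = 1`, the residual of the closed form is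
`J ω(t) + g = E(t) g`. Differentiating, `E'(t) = -η Θ E(t)`, and the factor `Θ` cancels against
`Θ⁻¹`, so `ω'(t) = -η Jᵀ E(t) g`, which is `-η Jᵀ` applied to the residual.
-/

open Matrix

attribute [local instance] Matrix.linftyOpNormedAddCommGroup Matrix.linftyOpNormedSpace
  Matrix.linftyOpNormedRing Matrix.linftyOpNormedAlgebra

section Calculus

variable {𝕂 : Type*} [RCLike 𝕂] {m n : Type*} [Fintype m] [Fintype n]

theorem HasDerivAt.const_mulVec {f : 𝕂 → n → 𝕂} {f' : n → 𝕂} {t : 𝕂}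
    (hf : HasDerivAt f f' t) (K : Matrix m n 𝕂) :
    HasDerivAt (fun s => K *ᵥ f s) (K *ᵥ f') t :=
  (LinearMap.toContinuousLinearMap (mulVecLin K)).hasFDerivAt.comp_hasDerivAt t hf

theorem HasDerivAt.mulVec_const {M : 𝕂 → Matrix m n 𝕂} {M' : Matrix m n 𝕂} {t : 𝕂}
    (hM : HasDerivAt M M' t) (v : n → 𝕂) :
    HasDerivAt (fun s => M s *ᵥ v) (M' *ᵥ v) t :=
  let L : Matrix m n 𝕂 →ₗ[𝕂] m → 𝕂 :=
    { toFun := (· *ᵥ v), map_add' := (add_mulVec · · v), map_smul' := (smul_mulVec · · v) }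
  (LinearMap.toContinuousLinearMap L).hasFDerivAt.comp_hasDerivAt t hM

theorem hasDerivAt_exp_smul_mulVec [DecidableEq m] (A : Matrix m m 𝕂) (v : m → 𝕂) (c t : 𝕂) :
    HasDerivAt (fun s : 𝕂 => NormedSpace.exp ((c * s) • A) *ᵥ v)
      (c • (A *ᵥ (NormedSpace.exp ((c * t) • A) *ᵥ v))) t := by
  have hexp := (hasDerivAt_exp_smul_const' (𝕂 := 𝕂) A (c * t)).scomp t
    ((hasDerivAt_id t).const_mul c)
  rw [mulVec_mulVec, ← smul_mulVec]
  have h := hexp.mulVec_const v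
  simp only [Function.comp_def, mul_one] at h
  -- `h` reaches the matrix operations through the operator-norm instances, which agree with the
  -- plain ones only up to unfolding, so `exact` succeeds where `simpa` does not.
  exact h

end Calculus

section LinearizedFlow

variable {n p : Type*} [Fintype n] [DecidableEq n]

noncomputable def linearizedParamFlow (J : Matrix n p ℝ) (Θ : Matrix n n ℝ) (η : ℝ)
    (g : n → ℝ) (t : ℝ) : p → ℝ :=
  -(Jᵀ *ᵥ (Θ⁻¹ *ᵥ ((1 - NormedSpace.exp (-(η * t) • Θ)) *ᵥ g)))

theorem linearizedParamFlow_zero (J : Matrix n p ℝ) (Θ : Matrix n n ℝ) (η : ℝ) (g : n → ℝ) :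
    linearizedParamFlow J Θ η g 0 = 0 := by
  simp [linearizedParamFlow, NormedSpace.exp_zero]

theorem mulVec_linearizedParamFlow_add [Fintype p] {J : Matrix n p ℝ} {Θ : Matrix n n ℝ}
    (η : ℝ) (g : n → ℝ) (hΘ : Θ = J * Jᵀ) (hΘinv : IsUnit Θ) (t : ℝ) :
    J *ᵥ linearizedParamFlow J Θ η g t + g = NormedSpace.exp (-(η * t) • Θ) *ᵥ g := by
  have hdet : IsUnit Θ.det := (isUnit_iff_isUnit_det Θ).mp hΘinv
  rw [linearizedParamFlow, mulVec_neg, mulVec_mulVec, mulVec_mulVec, ← hΘ,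
    mul_nonsing_inv Θ hdet, one_mulVec, sub_mulVec, one_mulVec]
  abel

theorem hasDerivAt_linearizedParamFlow [Fintype p] (J : Matrix n p ℝ) {Θ : Matrix n n ℝ}
    (η : ℝ) (g : n → ℝ) (hΘinv : IsUnit Θ) (t : ℝ) :
    HasDerivAt (linearizedParamFlow J Θ η g)
      ((-η) • (Jᵀ *ᵥ (NormedSpace.exp (-(η * t) • Θ) *ᵥ g))) t := by
  have hdet : IsUnit Θ.det := (isUnit_iff_isUnit_det Θ).mp hΘinv
  have hflow : linearizedParamFlow J Θ η g = fun s =>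
      Jᵀ *ᵥ (Θ⁻¹ *ᵥ (NormedSpace.exp ((-η * s) • Θ) *ᵥ g)) - Jᵀ *ᵥ (Θ⁻¹ *ᵥ g) := by
    funext s
    rw [linearizedParamFlow, sub_mulVec, one_mulVec, mulVec_sub, mulVec_sub, neg_mul]
    abel
  have hderiv := (((hasDerivAt_exp_smul_mulVec Θ g (-η) t).const_mulVec Θ⁻¹).const_mulVec
    Jᵀ).sub_const (Jᵀ *ᵥ (Θ⁻¹ *ᵥ g))
  rwa [mulVec_smul, mulVec_mulVec _ Θ⁻¹ Θ, nonsing_inv_mul Θ hdet, one_mulVec, mulVec_smul,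
    neg_mul, ← hflow] at hderiv

end LinearizedFlow

theorem linearized_param_flow_closed_form {N P : ℕ}
    (J₀ : Matrix (Fin N) (Fin P) ℝ) (g₀ : Fin N → ℝ)
    (Θ₀ : Matrix (Fin N) (Fin N) ℝ) (hΘ₀ : Θ₀ = J₀ * J₀ᵀ) (hΘ₀inv : IsUnit Θ₀)
    (η : ℝ)
    (ω : ℝ → (Fin P → ℝ))
    (hω : ∀ t : ℝ, ω t =
      -(J₀ᵀ.mulVec (Θ₀⁻¹.mulVec
        ((1 - NormedSpace.exp (-(η * t) • Θ₀)).mulVec g₀)))) :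
    ω 0 = 0 ∧
      ∀ t : ℝ, 0 ≤ t →
        HasDerivAt ω (-(η • (J₀ᵀ.mulVec (J₀.mulVec (ω t) + g₀)))) t := by
  obtain rfl : ω = linearizedParamFlow J₀ Θ₀ η g₀ := funext hω
  refine ⟨linearizedParamFlow_zero J₀ Θ₀ η g₀, fun t _ => ?_⟩
  rw [mulVec_linearizedParamFlow_add η g₀ hΘ₀ hΘ₀inv t, ← neg_smul]
  exact hasDerivAt_linearizedParamFlow J₀ η g₀ hΘ₀inv t
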